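/- arXiv:1610.08417 — 4 statements merged into one kernel-verified Lean document; each statement's English description precedes it below -/
import Mathlib

section
/- Let Σ22 be the (s+1)×(s+1) Gram matrix of the vectors (Φ(0), φ(0), φ(-h), …, φ(-(s-1)h)) (i.e. entries are the Euclidean inner products of these vectors), let Σ12 ∈ ℝ^{1×(s+1)} be the row vector (Φ(h)ᵀΦ(0), Φ(h)ᵀφ(0), Φ(h)ᵀφ(-h), …, Φ(h)ᵀφ(-(s-1)h)), and let Σ11 = Φ(h)ᵀΦ(h). Then Σ22 is invertible and, for all real numbers y_i, f_i, f_{i-1}, …, f_{i-s+1}: (i) the conditional mean given by the Gaussian conditioning formula satisfies Σ12 Σ22^{-1} (y_i, f_i, …, f_{i-s+1})ᵀ = y_i + h ∑_{j=0}^{s-1} β_{j,s}^{AB} f_{i-j}, the s-step Adams–Bashforth predictor; and (ii) the conditional variance given by the Schur complement satisfies Σ11 − Σ12 Σ22^{-1} Σ12ᵀ = 0. -/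
open Matrix MeasureTheory intervalIntegral

noncomputable section

/-- The Lagrange basis polynomial `ℓ_j^{0:s-1}` on the equispaced nodes
`t_{i-k} = -k·h`, `k = 0, …, s-1`. -/
def lagAB (s : ℕ) (h : ℝ) (j : Fin s) (ω : ℝ) : ℝ :=
  ∏ k ∈ Finset.univ.erase j, (ω + (k : ℝ) * h) / (((k : ℝ) - (j : ℝ)) * h)

/-- The `s`-step Adams–Bashforth coefficients `β_{j,s}^{AB} = h⁻¹ ∫_0^h ℓ_j^{0:s-1}`. -/
def betaAB (s : ℕ) (h : ℝ) (j : Fin s) : ℝ :=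
  h⁻¹ * ∫ ω in (0:ℝ)..h, lagAB s h j ω

/-- `φ(ω) = (0, ℓ_0^{0:s-1}(ω), …, ℓ_{s-1}^{0:s-1}(ω))ᵀ ∈ ℝ^{s+1}`. -/
def phiAB (s : ℕ) (h : ℝ) (ω : ℝ) : Fin (s + 1) → ℝ :=
  Fin.cons 0 fun j => lagAB s h j ω

/-- `Φ(ω) = (1, ∫_0^ω ℓ_0^{0:s-1}, …, ∫_0^ω ℓ_{s-1}^{0:s-1})ᵀ ∈ ℝ^{s+1}`. -/
def PhiAB (s : ℕ) (h : ℝ) (ω : ℝ) : Fin (s + 1) → ℝ :=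
  Fin.cons 1 fun j => ∫ u in (0:ℝ)..ω, lagAB s h j u

/-- The family of vectors `(Φ(0), φ(0), φ(-h), …, φ(-(s-1)h))`. -/
def Vab (s : ℕ) (h : ℝ) : Fin (s + 1) → Fin (s + 1) → ℝ :=
  Fin.cons (PhiAB s h 0) fun k => phiAB s h (-(k : ℝ) * h)

/-- `Σ22`, the Gram matrix of the vectors `(Φ(0), φ(0), φ(-h), …, φ(-(s-1)h))`. -/
def Sigma22 (s : ℕ) (h : ℝ) : Matrix (Fin (s + 1)) (Fin (s + 1)) ℝ :=
  fun a b => Vab s h a ⬝ᵥ Vab s h b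

/-- `Σ12`, the row vector `(Φ(h)ᵀΦ(0), Φ(h)ᵀφ(0), Φ(h)ᵀφ(-h), …, Φ(h)ᵀφ(-(s-1)h))`. -/
def Sigma12 (s : ℕ) (h : ℝ) : Fin (s + 1) → ℝ :=
  fun b => PhiAB s h h ⬝ᵥ Vab s h b

/-- `Σ11 = Φ(h)ᵀΦ(h)`. -/
def Sigma11 (s : ℕ) (h : ℝ) : ℝ := PhiAB s h h ⬝ᵥ PhiAB s h h

/-- Lagrange basis polynomials evaluate to Kronecker delta at the nodes. -/
lemma lagAB_node (s : ℕ) {h : ℝ} (hh : h ≠ 0) (j k : Fin s) :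
    lagAB s h j (-(k : ℝ) * h) = if j = k then 1 else 0 := by
  unfold lagAB
  rcases eq_or_ne j k with rfl | hjk
  · rw [if_pos rfl]
    apply Finset.prod_eq_one
    intro m hm
    have hmj : m ≠ j := Finset.ne_of_mem_erase hm
    have hmj' : (m : ℝ) ≠ (j : ℝ) := by
      exact_mod_cast fun e => hmj (Fin.ext (by exact_mod_cast e))
    have hne : ((m : ℝ) - (j : ℝ)) * h ≠ 0 :=
      mul_ne_zero (sub_ne_zero.mpr hmj') hh
    rw [div_eq_one_iff_eq hne]; ring
  · rw [if_neg hjk]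
    refine Finset.prod_eq_zero (Finset.mem_erase.mpr ⟨fun e => hjk e.symm, Finset.mem_univ k⟩) ?_
    rw [show (-(k : ℝ) * h + (k : ℝ) * h) = 0 by ring, zero_div]

lemma Vab_eq_one (s : ℕ) {h : ℝ} (hh : h ≠ 0) :
    Vab s h = fun a b => (1 : Matrix (Fin (s + 1)) (Fin (s + 1)) ℝ) a b := by
  funext a b
  refine Fin.cases ?_ (fun k => ?_) a
  · refine Fin.cases ?_ (fun j => ?_) b
    · simp [Vab, PhiAB, Matrix.one_apply]
    · simp [Vab, PhiAB, Matrix.one_apply, intervalIntegral.integral_same,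
        (Fin.succ_ne_zero j).symm]
  · refine Fin.cases ?_ (fun j => ?_) b
    · simp [Vab, phiAB, Matrix.one_apply, Fin.succ_ne_zero]
    · have hl := lagAB_node s hh j k
      rw [neg_mul] at hl
      simp [Vab, phiAB, Matrix.one_apply, hl, Fin.succ_inj, eq_comm]

/-- **Proposition 1.** `Σ22` is invertible; the conditional mean
`Σ12 Σ22⁻¹ (y_i, f_i, …, f_{i-s+1})ᵀ` equals the `s`-step Adams–Bashforth predictor
`y_i + h ∑_{j=0}^{s-1} β_{j,s}^{AB} f_{i-j}`; and the conditional variance (Schur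
complement) `Σ11 − Σ12 Σ22⁻¹ Σ12ᵀ` is zero. -/
theorem proposition1 (s : ℕ) (hs : 1 ≤ s) (h : ℝ) (hh : 0 < h) :
    IsUnit (Sigma22 s h) ∧
    (∀ z : Fin (s + 1) → ℝ,
      Sigma12 s h ⬝ᵥ ((Sigma22 s h)⁻¹ *ᵥ z) =
        z 0 + h * ∑ j : Fin s, betaAB s h j * z j.succ) ∧
    Sigma11 s h - Sigma12 s h ⬝ᵥ ((Sigma22 s h)⁻¹ *ᵥ Sigma12 s h) = 0 := by
  have hne : h ≠ 0 := ne_of_gt hh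
  have hV := Vab_eq_one s hne
  have hS : Sigma22 s h = 1 := by
    ext a b
    simp [Sigma22, hV, dotProduct, Matrix.one_apply, mul_ite, ite_mul]
  have hSinv : (Sigma22 s h)⁻¹ = 1 := by rw [hS]; exact Matrix.inv_eq_left_inv (by simp)
  have h12 : Sigma12 s h = PhiAB s h h := by
    funext b
    simp [Sigma12, hV, dotProduct, Matrix.one_apply, mul_ite, eq_comm]
  refine ⟨hS ▸ isUnit_one, fun z => ?_, ?_⟩
  · rw [hSinv, Matrix.one_mulVec, h12, dotProduct, Fin.sum_univ_succ]
    simp only [PhiAB, Fin.cons_zero, Fin.cons_succ, one_mul]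
    rw [Finset.mul_sum]
    congr 1
    apply Finset.sum_congr rfl
    intro j _
    rw [betaAB]
    field_simp
  · rw [hSinv, Matrix.one_mulVec, h12, Sigma11, sub_self]
end
end

section
/- Let Σ22⁺ be the (s+1)×(s+1) Gram matrix of the vectors (Φ⁺(0), φ⁺(0), φ⁺(-h), …, φ⁺(-(s-1)h)), let Σ12⁺ ∈ ℝ^{1×(s+1)} be the row vector (Φ⁺(h)ᵀΦ⁺(0), Φ⁺(h)ᵀφ⁺(0), …, Φ⁺(h)ᵀφ⁺(-(s-1)h)), and let Σ11⁺ = Φ⁺(h)ᵀΦ⁺(h). Then Σ22⁺ is invertible and, for all real numbers y_i, f_i, …, f_{i-s+1}: (i) Σ12⁺ (Σ22⁺)^{-1} (y_i, f_i, …, f_{i-s+1})ᵀ = y_i + h ∑_{j=0}^{s-1} β_{j,s}^{AB} f_{i-j}, i.e. the conditional mean still equals the s-step Adams–Bashforth predictor; and (ii) the Schur complement satisfies Σ11⁺ − Σ12⁺ (Σ22⁺)^{-1} (Σ12⁺)ᵀ = (α h^{s+1} β_{-1,s+1}^{AM})², so the conditional standard deviation equals α h^{s+1} β_{-1,s+1}^{AM}.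 -/
open Matrix MeasureTheory intervalIntegral

noncomputable section

/-- The Lagrange basis polynomial `ℓ_{-1}^{-1:s-1}` on the nodes
`t_{i+1} = h, t_i = 0, …, t_{i-s+1} = -(s-1)h`, corresponding to the node `t_{i+1}`. -/
def lagAMm1 (s : ℕ) (h : ℝ) (ω : ℝ) : ℝ :=
  ∏ k ∈ Finset.range s, (ω + (k : ℝ) * h) / (((k : ℝ) + 1) * h)

/-- The Adams–Moulton coefficient `β_{-1,s+1}^{AM} = h⁻¹ ∫_0^h ℓ_{-1}^{-1:s-1}`. -/
def betaAMm1 (s : ℕ) (h : ℝ) : ℝ :=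
  h⁻¹ * ∫ ω in (0:ℝ)..h, lagAMm1 s h ω

/-- The augmented basis `φ⁺(ω) ∈ ℝ^{s+2}`, obtained by appending
`α h^s ℓ_{-1}^{-1:s-1}(ω)` to `φ(ω)`. -/
def phiP (s : ℕ) (h α : ℝ) (ω : ℝ) : Fin (s + 2) → ℝ :=
  Fin.snoc (phiAB s h ω) (α * h ^ s * lagAMm1 s h ω)

/-- The augmented basis `Φ⁺(ω) ∈ ℝ^{s+2}`, obtained by appending
`α h^s ∫_0^ω ℓ_{-1}^{-1:s-1}` to `Φ(ω)`. -/
def PhiP (s : ℕ) (h α : ℝ) (ω : ℝ) : Fin (s + 2) → ℝ :=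
  Fin.snoc (PhiAB s h ω) (α * h ^ s * ∫ u in (0:ℝ)..ω, lagAMm1 s h u)

/-- The family of vectors `(Φ⁺(0), φ⁺(0), φ⁺(-h), …, φ⁺(-(s-1)h))`. -/
def VabP (s : ℕ) (h α : ℝ) : Fin (s + 1) → Fin (s + 2) → ℝ :=
  Fin.cons (PhiP s h α 0) fun k => phiP s h α (-(k : ℝ) * h)

/-- `Σ22⁺`, the Gram matrix of the vectors `(Φ⁺(0), φ⁺(0), φ⁺(-h), …, φ⁺(-(s-1)h))`. -/
def Sigma22P (s : ℕ) (h α : ℝ) : Matrix (Fin (s + 1)) (Fin (s + 1)) ℝ :=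
  fun a b => VabP s h α a ⬝ᵥ VabP s h α b

/-- `Σ12⁺`, the row vector `(Φ⁺(h)ᵀΦ⁺(0), Φ⁺(h)ᵀφ⁺(0), …, Φ⁺(h)ᵀφ⁺(-(s-1)h))`. -/
def Sigma12P (s : ℕ) (h α : ℝ) : Fin (s + 1) → ℝ :=
  fun b => PhiP s h α h ⬝ᵥ VabP s h α b

/-- `Σ11⁺ = Φ⁺(h)ᵀΦ⁺(h)`. -/
def Sigma11P (s : ℕ) (h α : ℝ) : ℝ := PhiP s h α h ⬝ᵥ PhiP s h α h

lemma lagAMm1_node (s : ℕ) (h : ℝ) (k : Fin s) :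
    lagAMm1 s h (-(k : ℝ) * h) = 0 := by
  unfold lagAMm1
  apply Finset.prod_eq_zero (Finset.mem_range.mpr k.isLt)
  have : -(k : ℝ) * h + (k : ℝ) * h = 0 := by ring
  rw [this, zero_div]

lemma vabP_eq (s : ℕ) (h α : ℝ) (hh : h ≠ 0) (a : Fin (s + 1)) :
    VabP s h α a = Pi.single (Fin.castSucc a) 1 := by
  funext b
  induction a using Fin.cases with
  | zero =>
      show PhiP s h α 0 b = _
      unfold PhiP
      induction b using Fin.lastCases with
      | last =>
          rw [Fin.snoc_last, intervalIntegral.integral_same]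
          rw [Pi.single_apply, if_neg (Fin.castSucc_lt_last _).ne']
          ring
      | cast c =>
          rw [Fin.snoc_castSucc]
          unfold PhiAB
          induction c using Fin.cases with
          | zero => simp
          | succ j =>
              rw [Fin.cons_succ, intervalIntegral.integral_same,
                Pi.single_apply, if_neg]
              intro hc
              exact (Fin.succ_ne_zero j) (Fin.castSucc_inj.mp hc)
  | succ k =>
      show phiP s h α (-(k : ℝ) * h) b = _
      unfold phiP
      induction b using Fin.lastCases with
      | last =>
          rw [Fin.snoc_last, lagAMm1_node,
            Pi.single_apply, if_neg (Fin.castSucc_lt_last _).ne']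
          ring
      | cast c =>
          rw [Fin.snoc_castSucc]
          unfold phiAB
          induction c using Fin.cases with
          | zero =>
              rw [Fin.cons_zero, Pi.single_apply, if_neg]
              intro hc
              exact (Fin.succ_ne_zero k) (Fin.castSucc_inj.mp hc).symm
          | succ j =>
              rw [Fin.cons_succ, lagAB_node s hh, Pi.single_apply]
              by_cases hjk : j = k
              · rw [if_pos hjk, if_pos (by rw [hjk])]
              · rw [if_neg hjk, if_neg]
                intro hc
                exact hjk (Fin.succ_inj.mp (Fin.castSucc_inj.mp hc))

lemma sigma22P_eq (s : ℕ) (h α : ℝ) (hh : h ≠ 0) :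
    Sigma22P s h α = 1 := by
  ext a b
  rw [Matrix.one_apply]
  show VabP s h α a ⬝ᵥ VabP s h α b = _
  rw [vabP_eq s h α hh, vabP_eq s h α hh, single_dotProduct, one_mul,
    Pi.single_apply]
  by_cases hab : a = b
  · rw [if_pos (by rw [hab]), if_pos hab]
  · rw [if_neg (fun hc => hab (Fin.castSucc_inj.mp hc)), if_neg hab]

lemma sigma12P_eq (s : ℕ) (h α : ℝ) (hh : h ≠ 0) (b : Fin (s + 1)) :
    Sigma12P s h α b = PhiP s h α h (Fin.castSucc b) := by
  show PhiP s h α h ⬝ᵥ VabP s h α b = _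
  rw [vabP_eq s h α hh, dotProduct_single, mul_one]

/-- **Proposition 2.** `Σ22⁺` is invertible; the conditional mean
`Σ12⁺ (Σ22⁺)⁻¹ (y_i, f_i, …, f_{i-s+1})ᵀ` still equals the `s`-step Adams–Bashforth
predictor `y_i + h ∑_{j=0}^{s-1} β_{j,s}^{AB} f_{i-j}`; and the Schur complement
`Σ11⁺ − Σ12⁺ (Σ22⁺)⁻¹ (Σ12⁺)ᵀ` equals `(α h^{s+1} β_{-1,s+1}^{AM})²`, so the
conditional standard deviation equals `α h^{s+1} β_{-1,s+1}^{AM}`. -/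
theorem proposition2 (s : ℕ) (hs : 1 ≤ s) (h : ℝ) (hh : 0 < h) (α : ℝ) (hα : 0 < α) :
    IsUnit (Sigma22P s h α) ∧
    (∀ z : Fin (s + 1) → ℝ,
      Sigma12P s h α ⬝ᵥ ((Sigma22P s h α)⁻¹ *ᵥ z) =
        z 0 + h * ∑ j : Fin s, betaAB s h j * z j.succ) ∧
    Sigma11P s h α - Sigma12P s h α ⬝ᵥ ((Sigma22P s h α)⁻¹ *ᵥ Sigma12P s h α) =
      (α * h ^ (s + 1) * betaAMm1 s h) ^ 2 := by
  have hh' : h ≠ 0 := hh.ne'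
  have hSig : Sigma22P s h α = 1 := sigma22P_eq s h α hh'
  have hinv : (Sigma22P s h α)⁻¹ = 1 := by rw [hSig, inv_one]
  have h0 : PhiP s h α h (Fin.castSucc 0) = 1 := by
    unfold PhiP
    rw [Fin.snoc_castSucc]
    rfl
  have hsucc : ∀ j : Fin s, PhiP s h α h (Fin.castSucc j.succ) = h * betaAB s h j := by
    intro j
    unfold PhiP
    rw [Fin.snoc_castSucc]
    show (∫ u in (0:ℝ)..h, lagAB s h j u) = _
    rw [betaAB, ← mul_assoc, mul_inv_cancel₀ hh', one_mul]
  have hlast : PhiP s h α h (Fin.last (s + 1)) = α * h ^ s * (h * betaAMm1 s h) := by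
    unfold PhiP
    rw [Fin.snoc_last, betaAMm1, ← mul_assoc h, mul_inv_cancel₀ hh', one_mul]
  refine ⟨by rw [hSig]; exact isUnit_one, ?_, ?_⟩
  · intro z
    rw [hinv, Matrix.one_mulVec]
    show (∑ b : Fin (s + 1), Sigma12P s h α b * z b) = _
    rw [Fin.sum_univ_succ, sigma12P_eq s h α hh', h0, one_mul, Finset.mul_sum]
    congr 1
    apply Finset.sum_congr rfl
    intro j _
    rw [sigma12P_eq s h α hh', hsucc j]
    ring
  · rw [hinv, Matrix.one_mulVec]
    have h12 : (Sigma12P s h α ⬝ᵥ Sigma12P s h α) =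
        ∑ b : Fin (s + 1),
          PhiP s h α h (Fin.castSucc b) * PhiP s h α h (Fin.castSucc b) := by
      show (∑ b : Fin (s + 1), Sigma12P s h α b * Sigma12P s h α b) = _
      exact Finset.sum_congr rfl fun b _ => by rw [sigma12P_eq s h α hh']
    have h11 : Sigma11P s h α =
        (∑ b : Fin (s + 1),
          PhiP s h α h (Fin.castSucc b) * PhiP s h α h (Fin.castSucc b)) +
          PhiP s h α h (Fin.last (s + 1)) * PhiP s h α h (Fin.last (s + 1)) := by
      show (∑ c : Fin (s + 2), PhiP s h α h c * PhiP s h α h c) = _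
      exact Fin.sum_univ_castSucc _
    rw [h11, h12, hlast, pow_succ]
    ring
end
end

section
/- Adams–Moulton analogue of Proposition 1: Let Σ22 be the (s+2)×(s+2) Gram matrix of the vectors (Ψ(0), ψ(h), ψ(0), ψ(-h), …, ψ(-(s-1)h)), let Σ12 ∈ ℝ^{1×(s+2)} be the row vector (Ψ(h)ᵀΨ(0), Ψ(h)ᵀψ(h), Ψ(h)ᵀψ(0), …, Ψ(h)ᵀψ(-(s-1)h)), and let Σ11 = Ψ(h)ᵀΨ(h). Then Σ22 is invertible and, for all real numbers y_i, f_{i+1}, f_i, …, f_{i-s+1}: (i) Σ12 Σ22^{-1} (y_i, f_{i+1}, f_i, …, f_{i-s+1})ᵀ = y_i + h ∑_{j=-1}^{s-1} β_{j,s+1}^{AM} f_{i-j}, the (s+1)-step Adams–Moulton predictor; and (ii) the Schur complement satisfies Σ11 − Σ12 Σ22^{-1} Σ12ᵀ = 0. -/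
open Matrix MeasureTheory intervalIntegral

noncomputable section

/-- The nodes `t_{i+1} = h, t_i = 0, …, t_{i-s+1} = -(s-1)h`, indexed by
`k : Fin (s+1)` standing for `j = k - 1 ∈ {-1, 0, …, s-1}`: node `k ↦ (1 - k)·h`. -/
def nodeAM (s : ℕ) (h : ℝ) (k : Fin (s + 1)) : ℝ := (1 - (k : ℝ)) * h

/-- The Lagrange basis polynomial `ℓ_j^{-1:s-1}` on the nodes
`t_{i+1}, t_i, …, t_{i-s+1}` (index `j : Fin (s+1)` stands for `j - 1 ∈ {-1,…,s-1}`). -/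
def lagAM (s : ℕ) (h : ℝ) (j : Fin (s + 1)) (ω : ℝ) : ℝ :=
  ∏ k ∈ Finset.univ.erase j, (ω - nodeAM s h k) / (nodeAM s h j - nodeAM s h k)

/-- The `(s+1)`-step Adams–Moulton coefficients `β_{j,s+1}^{AM} = h⁻¹ ∫_0^h ℓ_j^{-1:s-1}`. -/
def betaAM (s : ℕ) (h : ℝ) (j : Fin (s + 1)) : ℝ :=
  h⁻¹ * ∫ ω in (0:ℝ)..h, lagAM s h j ω

/-- `ψ(ω) = (0, ℓ_{-1}^{-1:s-1}(ω), ℓ_0^{-1:s-1}(ω), …, ℓ_{s-1}^{-1:s-1}(ω))ᵀ ∈ ℝ^{s+2}`. -/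
def psiAM (s : ℕ) (h : ℝ) (ω : ℝ) : Fin (s + 2) → ℝ :=
  Fin.cons 0 fun j => lagAM s h j ω

/-- `Ψ(ω) = (1, ∫_0^ω ℓ_{-1}^{-1:s-1}, …, ∫_0^ω ℓ_{s-1}^{-1:s-1})ᵀ ∈ ℝ^{s+2}`. -/
def PsiAM (s : ℕ) (h : ℝ) (ω : ℝ) : Fin (s + 2) → ℝ :=
  Fin.cons 1 fun j => ∫ u in (0:ℝ)..ω, lagAM s h j u

/-- The family of vectors `(Ψ(0), ψ(h), ψ(0), ψ(-h), …, ψ(-(s-1)h))`. -/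
def Vam (s : ℕ) (h : ℝ) : Fin (s + 2) → Fin (s + 2) → ℝ :=
  Fin.cons (PsiAM s h 0) fun k => psiAM s h (nodeAM s h k)

/-- `Σ22`, the Gram matrix of the vectors `(Ψ(0), ψ(h), ψ(0), ψ(-h), …, ψ(-(s-1)h))`. -/
def Sigma22AM (s : ℕ) (h : ℝ) : Matrix (Fin (s + 2)) (Fin (s + 2)) ℝ :=
  fun a b => Vam s h a ⬝ᵥ Vam s h b

/-- `Σ12`, the row vector `(Ψ(h)ᵀΨ(0), Ψ(h)ᵀψ(h), Ψ(h)ᵀψ(0), …, Ψ(h)ᵀψ(-(s-1)h))`. -/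
def Sigma12AM (s : ℕ) (h : ℝ) : Fin (s + 2) → ℝ :=
  fun b => PsiAM s h h ⬝ᵥ Vam s h b

/-- `Σ11 = Ψ(h)ᵀΨ(h)`. -/
def Sigma11AM (s : ℕ) (h : ℝ) : ℝ := PsiAM s h h ⬝ᵥ PsiAM s h h

lemma lag_at_node (s : ℕ) (h : ℝ) (hh : h ≠ 0) (j k : Fin (s + 1)) :
    lagAM s h j (nodeAM s h k) = if j = k then 1 else 0 := by
  by_cases hjk : j = k
  · subst hjk
    simp only [if_pos rfl, lagAM]
    apply Finset.prod_eq_one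
    intro k' hk'
    have hkj : k' ≠ j := (Finset.mem_erase.mp hk').1
    have hd : nodeAM s h j - nodeAM s h k' = ((k' : ℝ) - (j : ℝ)) * h := by
      simp only [nodeAM]; ring
    have hne : nodeAM s h j - nodeAM s h k' ≠ 0 := by
      rw [hd]
      refine mul_ne_zero (sub_ne_zero.mpr ?_) hh
      exact_mod_cast fun hc => hkj (Fin.val_injective (by exact_mod_cast hc))
    exact div_self hne
  · simp only [if_neg hjk, lagAM]
    apply Finset.prod_eq_zero
      (Finset.mem_erase.mpr ⟨fun hc => hjk hc.symm, Finset.mem_univ k⟩)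
    simp

lemma Vam_eq (s : ℕ) (h : ℝ) (hh : h ≠ 0) (a b : Fin (s + 2)) :
    Vam s h a b = if a = b then 1 else 0 := by
  induction a using Fin.cases with
  | zero =>
    induction b using Fin.cases with
    | zero => simp [Vam, PsiAM]
    | succ j => simp [Vam, PsiAM, Ne.symm (Fin.succ_ne_zero j)]
  | succ k =>
    induction b using Fin.cases with
    | zero => simp [Vam, psiAM, (Fin.succ_ne_zero k)]
    | succ j =>
      simp only [Vam, psiAM, Fin.cons_succ, lag_at_node s h hh j k,
        Fin.succ_inj]
      by_cases hc : j = k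
      · subst hc; simp
      · rw [if_neg hc, if_neg (fun hc2 => hc hc2.symm)]

lemma Sigma22_eq_one (s : ℕ) (h : ℝ) (hh : h ≠ 0) : Sigma22AM s h = 1 := by
  ext a b
  simp only [Sigma22AM, dotProduct, Vam_eq s h hh, Matrix.one_apply]
  simp [ite_and, eq_comm, Finset.sum_ite_eq]

lemma Sigma12_eq (s : ℕ) (h : ℝ) (hh : h ≠ 0) (b : Fin (s + 2)) :
    Sigma12AM s h b = PsiAM s h h b := by
  simp only [Sigma12AM, dotProduct, Vam_eq s h hh]
  simp [eq_comm, Finset.sum_ite_eq, mul_ite]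

/-- **Adams–Moulton analogue of Proposition 1.** `Σ22` is invertible; the conditional
mean `Σ12 Σ22⁻¹ (y_i, f_{i+1}, f_i, …, f_{i-s+1})ᵀ` equals the `(s+1)`-step
Adams–Moulton predictor `y_i + h ∑_{j=-1}^{s-1} β_{j,s+1}^{AM} f_{i-j}`; and the Schur
complement `Σ11 − Σ12 Σ22⁻¹ Σ12ᵀ` is zero. -/
theorem proposition1_AM (s : ℕ) (hs : 1 ≤ s) (h : ℝ) (hh : 0 < h) :
    IsUnit (Sigma22AM s h) ∧
    (∀ z : Fin (s + 2) → ℝ,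
      Sigma12AM s h ⬝ᵥ ((Sigma22AM s h)⁻¹ *ᵥ z) =
        z 0 + h * ∑ j : Fin (s + 1), betaAM s h j * z j.succ) ∧
    Sigma11AM s h - Sigma12AM s h ⬝ᵥ ((Sigma22AM s h)⁻¹ *ᵥ Sigma12AM s h) = 0 := by
  have hh' : h ≠ 0 := ne_of_gt hh
  have hS : Sigma22AM s h = 1 := Sigma22_eq_one s h hh'
  refine ⟨hS ▸ isUnit_one, ?_, ?_⟩
  · intro z
    rw [hS, inv_one, Matrix.one_mulVec]
    have : Sigma12AM s h ⬝ᵥ z = ∑ b, PsiAM s h h b * z b := by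
      simp [dotProduct, Sigma12_eq s h hh']
    rw [this, Fin.sum_univ_succ]
    have h0 : PsiAM s h h 0 * z 0 = z 0 := by simp [PsiAM]
    rw [h0, Finset.mul_sum]
    congr 1
    apply Finset.sum_congr rfl
    intro j _
    simp only [PsiAM, Fin.cons_succ, betaAM]
    field_simp
  · rw [hS, inv_one, Matrix.one_mulVec, Sigma11AM]
    have : Sigma12AM s h ⬝ᵥ Sigma12AM s h = PsiAM s h h ⬝ᵥ PsiAM s h h := by
      simp [dotProduct, Sigma12_eq s h hh']
    rw [this, sub_self]
end
end

section
/- Local truncation error of the s-step Adams–Bashforth method: there exists a constant C_s > 0 depending only on s such that for every h > 0 and every (s+1)-times continuously differentiable function y : [-(s-1)h, h] → ℝ, |y(h) − y(0) − h ∑_{j=0}^{s-1} β_{j,s}^{AB} y'(-j h)| ≤ C_s h^{s+1} sup_{ω ∈ [-(s-1)h, h]} |y^{(s+1)}(ω)|. -/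
/-!
The quadrature `h ∑ β_j y'(-jh)` is the integral over `[0, h]` of the Lagrange interpolant of
`y'` at the nodes `0, -h, …, -(s-1)h`, so the error is `∫₀ʰ (y' - interpolant)`. Interpolation
reproduces polynomials of degree `< s`, so subtracting from `y'` its Taylor polynomial `p` of
degree `s - 1` at the left end point bounds the integrand by `(1 + Λ) sup |y' - p|`, where
`Λ ≤ s ^ s` bounds the Lebesgue function `∑ |ℓ_j|` on `[0, h]`. Taylor's theorem gives
`sup |y' - p| ≤ M (s h) ^ s / (s - 1)!`.
-/

open MeasureTheory intervalIntegral

noncomputable section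

open Polynomial Set
open scoped Nat

lemma lagAB_eq_eval_basis (s : ℕ) (h : ℝ) (j : Fin s) (ω : ℝ) :
    lagAB s h j ω = (Lagrange.basis Finset.univ (fun k : Fin s => -(k : ℝ) * h) j).eval ω := by
  rw [lagAB, Lagrange.basis, eval_prod]
  refine Finset.prod_congr rfl fun k _ => ?_
  simp only [Lagrange.basisDivisor, eval_mul, eval_C, eval_sub, eval_X]
  rw [div_eq_inv_mul]
  ring_nf

lemma continuous_lagAB (s : ℕ) (h : ℝ) (j : Fin s) : Continuous (lagAB s h j) := by
  simpa only [funext (lagAB_eq_eval_basis s h j)] using Polynomial.continuous _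

lemma sum_lagAB_mul_eval (s : ℕ) {h : ℝ} (hh : h ≠ 0) {p : ℝ[X]} (hp : p.degree < s)
    (ω : ℝ) : ∑ j : Fin s, lagAB s h j ω * p.eval (-(j : ℝ) * h) = p.eval ω := by
  have hinj : InjOn (fun k : Fin s => -(k : ℝ) * h) (Finset.univ : Finset (Fin s)) := by
    intro x _ z _ hxz
    simpa [hh, Fin.val_inj] using hxz
  conv_rhs => rw [Lagrange.eq_interpolate (f := p) hinj (by simpa using hp)]
  simp only [Lagrange.interpolate_apply, eval_finsetSum, eval_mul, eval_C,
    lagAB_eq_eval_basis, mul_comm]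

lemma abs_lagAB_le {s : ℕ} {h : ℝ} (hh : 0 < h) (j : Fin s) {ω : ℝ} (hω : ω ∈ Icc 0 h) :
    |lagAB s h j ω| ≤ (s : ℝ) ^ (s - 1) := by
  rw [lagAB, Finset.abs_prod]
  calc ∏ k ∈ Finset.univ.erase j, |(ω + k * h) / ((k - j) * h)|
      ≤ ∏ _k ∈ Finset.univ.erase j, (s : ℝ) := by
        refine Finset.prod_le_prod (fun _ _ => abs_nonneg _) fun k hk => ?_
        have hkj : (1 : ℝ) ≤ |(k : ℝ) - j| := by
          have hne : (k : ℤ) - j ≠ 0 :=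
            sub_ne_zero.mpr (by exact_mod_cast Fin.val_ne_of_ne (Finset.ne_of_mem_erase hk))
          exact_mod_cast Int.one_le_abs hne
        have hks : (k : ℝ) + 1 ≤ s := by exact_mod_cast k.isLt
        rw [abs_div, abs_mul, abs_of_pos hh, div_le_iff₀ (by positivity),
          abs_of_nonneg (by nlinarith [hω.1])]
        calc ω + k * h ≤ (k + 1) * h := by linarith [hω.2]
          _ ≤ s * h := mul_le_mul_of_nonneg_right hks hh.le
          _ ≤ s * (|(k : ℝ) - j| * h) := by gcongr; exact le_mul_of_one_le_left hh.le hkj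
    _ = (s : ℝ) ^ (s - 1) := by simp [Finset.card_erase_of_mem]

lemma sum_abs_lagAB_le {s : ℕ} {h : ℝ} (hh : 0 < h) {ω : ℝ} (hω : ω ∈ Icc 0 h) :
    ∑ j : Fin s, |lagAB s h j ω| ≤ (s : ℝ) ^ s :=
  calc ∑ j : Fin s, |lagAB s h j ω| ≤ ∑ _j : Fin s, (s : ℝ) ^ (s - 1) :=
        Finset.sum_le_sum fun j _ => abs_lagAB_le hh j hω
    _ ≤ (s : ℝ) ^ s := by cases s <;> simp [pow_succ, mul_comm]

lemma abs_sub_sum_lagAB_mul_le {s : ℕ} {h : ℝ} (hh : 0 < h) {p : ℝ[X]} (hp : p.degree < s)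
    {g : ℝ → ℝ} {K ω : ℝ} (hω : ω ∈ Icc 0 h) (hgω : |g ω - p.eval ω| ≤ K)
    (hg : ∀ j : Fin s, |g (-(j : ℝ) * h) - p.eval (-(j : ℝ) * h)| ≤ K) :
    |g ω - ∑ j : Fin s, lagAB s h j ω * g (-(j : ℝ) * h)| ≤ (1 + (s : ℝ) ^ s) * K := by
  have hK : 0 ≤ K := (abs_nonneg _).trans hgω
  have hsplit : g ω - ∑ j : Fin s, lagAB s h j ω * g (-(j : ℝ) * h) =
      (g ω - p.eval ω) -
        ∑ j : Fin s, lagAB s h j ω * (g (-(j : ℝ) * h) - p.eval (-(j : ℝ) * h)) := by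
    simp only [mul_sub, Finset.sum_sub_distrib, sum_lagAB_mul_eval s hh.ne' hp]
    ring
  rw [hsplit]
  calc _ ≤ |g ω - p.eval ω| + ∑ j : Fin s,
          |lagAB s h j ω| * |g (-(j : ℝ) * h) - p.eval (-(j : ℝ) * h)| := by
        refine (abs_sub _ _).trans ?_
        gcongr
        simpa only [abs_mul] using Finset.abs_sum_le_sum_abs
          (fun j : Fin s => lagAB s h j ω * (g (-(j : ℝ) * h) - p.eval (-(j : ℝ) * h))) _
    _ ≤ K + ∑ j : Fin s, |lagAB s h j ω| * K := by
        gcongr with j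
        exact hg j
    _ ≤ (1 + (s : ℝ) ^ s) * K := by
        rw [← Finset.sum_mul]
        nlinarith [sum_abs_lagAB_le (s := s) hh hω]

/-- `taylorWithin` as an element of `ℝ[X]` rather than of `PolynomialModule ℝ ℝ`. -/
def taylorPolyWithin (f : ℝ → ℝ) (n : ℕ) (s : Set ℝ) (x₀ : ℝ) : ℝ[X] :=
  ∑ k ∈ Finset.range (n + 1), C (taylorCoeffWithin f k s x₀) * (X - C x₀) ^ k

lemma degree_taylorPolyWithin_lt (f : ℝ → ℝ) (n : ℕ) (s : Set ℝ) (x₀ : ℝ) :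
    (taylorPolyWithin f n s x₀).degree < (n + 1 : ℕ) := by
  refine degree_le_natDegree.trans_lt (WithBot.coe_lt_coe.mpr (Nat.lt_succ_of_le ?_))
  refine natDegree_sum_le_of_forall_le _ _ fun k hk => ?_
  refine (natDegree_C_mul_le _ _).trans (natDegree_pow_le.trans ?_)
  have := natDegree_X_sub_C_le x₀
  have := Finset.mem_range_succ_iff.mp hk
  nlinarith

lemma eval_taylorPolyWithin (f : ℝ → ℝ) (n : ℕ) (s : Set ℝ) (x₀ x : ℝ) :
    (taylorPolyWithin f n s x₀).eval x = taylorWithinEval f n s x₀ x := by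
  simp only [taylorPolyWithin, taylor_within_apply, taylorCoeffWithin, eval_finsetSum,
    eval_mul, eval_C, eval_pow, eval_sub, eval_X, smul_eq_mul]
  exact Finset.sum_congr rfl fun k _ => by ring

lemma abs_sub_eval_taylorPolyWithin_le {f : ℝ → ℝ} {a b M x : ℝ} {n : ℕ} (hab : a ≤ b)
    (hf : ContDiffOn ℝ (n + 1) f (Icc a b)) (hx : x ∈ Icc a b)
    (hM : ∀ y ∈ Icc a b, |iteratedDerivWithin (n + 1) f (Icc a b) y| ≤ M) :
    |f x - (taylorPolyWithin f n (Icc a b) a).eval x| ≤ M * (b - a) ^ (n + 1) / n ! := by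
  rw [eval_taylorPolyWithin]
  refine (taylor_mean_remainder_bound hab hf hx hM).trans ?_
  have hM0 : 0 ≤ M := (abs_nonneg _).trans (hM x hx)
  gcongr
  · linarith [hx.1]
  · exact hx.2

lemma integral_derivWithin_Icc_of_subset {y : ℝ → ℝ} {a b c : ℝ} (hab : a ≤ b) (hbc : b < c)
    (hy : ContDiffOn ℝ 1 y (Icc a c)) :
    ∫ x in b..c, derivWithin y (Icc a c) x = y c - y b := by
  have hsub : Icc b c ⊆ Icc a c := Icc_subset_Icc_left hab
  refine integral_eq_sub_of_hasDerivAt_of_le hbc.le (hy.continuousOn.mono hsub)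
    (fun x hx => ?_) ?_
  · have hxa : a < x := hab.trans_lt hx.1
    exact ((hy.differentiableOn one_ne_zero x ⟨hxa.le, hx.2.le⟩).hasDerivWithinAt).hasDerivAt
      (Icc_mem_nhds hxa hx.2)
  · exact ((hy.continuousOn_derivWithin (uniqueDiffOn_Icc (hab.trans_lt hbc)) le_rfl).mono
      hsub).intervalIntegrable_of_Icc hbc.le

lemma integral_sub_sum_lagAB_mul {s : ℕ} {h : ℝ} (hh : h ≠ 0) {g : ℝ → ℝ}
    (hg : IntervalIntegrable g volume 0 h) (c : Fin s → ℝ) :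
    ∫ ω in (0 : ℝ)..h, (g ω - ∑ j, lagAB s h j ω * c j) =
      (∫ ω in (0 : ℝ)..h, g ω) - h * ∑ j, betaAB s h j * c j := by
  have hlag : ∀ j : Fin s, Continuous fun ω => lagAB s h j ω * c j :=
    fun j => (continuous_lagAB s h j).mul continuous_const
  rw [intervalIntegral.integral_sub hg
      ((continuous_finsetSum _ fun j _ => hlag j).intervalIntegrable 0 h),
    integral_finsetSum fun j _ => (hlag j).intervalIntegrable 0 h, Finset.mul_sum]
  congr 1
  refine Finset.sum_congr rfl fun j _ => ?_
  rw [intervalIntegral.integral_mul_const, betaAB]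
  field_simp

lemma neg_mul_mem_Icc {s : ℕ} {h : ℝ} (hh : 0 ≤ h) (j : Fin s) :
    -(j : ℝ) * h ∈ Icc (-((s : ℝ) - 1) * h) h := by
  have hjs : (j : ℝ) + 1 ≤ s := by exact_mod_cast j.isLt
  constructor <;> nlinarith [(Nat.cast_nonneg j : (0 : ℝ) ≤ j)]

/-- Local truncation error of the `s`-step Adams–Bashforth method: there is a
constant `C_s > 0` depending only on `s` such that for every `h > 0` and every
`(s+1)`-times continuously differentiable `y : [-(s-1)h, h] → ℝ`,
`|y(h) − y(0) − h ∑_{j=0}^{s-1} β_{j,s}^{AB} y'(-jh)| ≤ C_s h^{s+1} sup |y^{(s+1)}|`. -/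
theorem adamsBashforth_local_truncation_error (s : ℕ) (hs : 1 ≤ s) :
    ∃ C : ℝ, 0 < C ∧ ∀ h : ℝ, 0 < h → ∀ y : ℝ → ℝ,
      ContDiffOn ℝ (s + 1) y (Set.Icc (-((s : ℝ) - 1) * h) h) →
      ∀ M : ℝ,
        (∀ ω ∈ Set.Icc (-((s : ℝ) - 1) * h) h,
          |iteratedDerivWithin (s + 1) y (Set.Icc (-((s : ℝ) - 1) * h) h) ω| ≤ M) →
        |y h - y 0 - h * ∑ j : Fin s,
            betaAB s h j *
              derivWithin y (Set.Icc (-((s : ℝ) - 1) * h) h) (-(j : ℝ) * h)| ≤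
          C * h ^ (s + 1) * M := by
  obtain ⟨n, rfl⟩ : ∃ n, s = n + 1 := ⟨s - 1, by omega⟩
  set s := n + 1
  refine ⟨(1 + (s : ℝ) ^ s) * (s : ℝ) ^ s / n !, by positivity, fun h hh y hy M hM => ?_⟩
  set a := -((s : ℝ) - 1) * h
  have ha : a ≤ 0 := by simp only [a, s]; push_cast; nlinarith [(n.cast_nonneg : (0 : ℝ) ≤ n)]
  set g := derivWithin y (Icc a h)
  have hg : ContDiffOn ℝ s g (Icc a h) :=
    hy.derivWithin (uniqueDiffOn_Icc (ha.trans_lt hh)) le_rfl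
  have hgM : ∀ x ∈ Icc a h, |iteratedDerivWithin s g (Icc a h) x| ≤ M := by
    simpa only [g, ← iteratedDerivWithin_succ'] using hM
  have hp : ∀ x ∈ Icc a h,
      |g x - (taylorPolyWithin g n (Icc a h) a).eval x| ≤ M * (s * h) ^ s / n ! :=
    fun x hx => (abs_sub_eval_taylorPolyWithin_le (ha.trans hh.le) hg hx hgM).trans_eq
      (by simp only [a, s]; push_cast; ring)
  have hbound : ∀ ω ∈ uIoc 0 h, ‖g ω - ∑ j : Fin s, lagAB s h j ω * g (-(j : ℝ) * h)‖ ≤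
      (1 + (s : ℝ) ^ s) * (M * (s * h) ^ s / n !) := by
    intro ω hω
    have hω' : ω ∈ Icc 0 h := Ioc_subset_Icc_self (uIoc_of_le hh.le ▸ hω)
    exact abs_sub_sum_lagAB_mul_le hh (degree_taylorPolyWithin_lt g n _ a) hω'
      (hp ω (Icc_subset_Icc_left ha hω')) fun j => hp _ (neg_mul_mem_Icc hh.le j)
  have hgint : IntervalIntegrable g volume 0 h :=
    (hg.continuousOn.mono (Icc_subset_Icc_left ha)).intervalIntegrable_of_Icc hh.le
  rw [← integral_derivWithin_Icc_of_subset ha hh (hy.of_le (by simp)),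
    ← integral_sub_sum_lagAB_mul hh.ne' hgint]
  refine (norm_integral_le_of_norm_le_const hbound).trans_eq ?_
  rw [sub_zero, abs_of_pos hh]
  ring
end
end
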